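/- If |α(ω)| ≠ 1 for an eigenvalue ω² of K, then ω² lies in a band gap of the infinite periodic system: there is no k ∈ R for which ω² is an eigenvalue of the Bloch matrix K̃(k). -/

import Mathlib

/-- The `(N-1)×(N-1)` Dirichlet stiffness matrix of a single unit cell. -/
noncomputable def Kdir (N : ℕ) (d : ℕ → ℝ) : Matrix (Fin (N - 1)) (Fin (N - 1)) ℝ :=
  fun i j =>
    if (i : ℕ) = (j : ℕ) then 1 / d (i : ℕ) + 1 / d ((i : ℕ) + 1)
    else if (i : ℕ) + 1 = (j : ℕ) then -(1 / d ((i : ℕ) + 1))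
    else if (j : ℕ) + 1 = (i : ℕ) then -(1 / d ((j : ℕ) + 1))
    else 0

/-- The `N×N` Bloch (Floquet) matrix `K̃(k)` of the infinitely periodic chain, with
diagonal entries `1/d_{i-1} + 1/d_i` (indices mod `N`), off-diagonal entries `-1/d_i`,
and corner entries `-(1/d_{N-1}) e^{∓iNk}`. -/
noncomputable def Kbloch (N : ℕ) (d : ℕ → ℝ) (k : ℝ) : Matrix (Fin N) (Fin N) ℂ :=
  fun i j =>
    (if (i : ℕ) = (j : ℕ) then
        ((1 / d (((i : ℕ) + (N - 1)) % N) + 1 / d (i : ℕ) : ℝ) : ℂ) else 0)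
    + (if (i : ℕ) + 1 = (j : ℕ) then ((-(1 / d (i : ℕ)) : ℝ) : ℂ) else 0)
    + (if (j : ℕ) + 1 = (i : ℕ) then ((-(1 / d (j : ℕ)) : ℝ) : ℂ) else 0)
    + (if (i : ℕ) = 0 ∧ (j : ℕ) = N - 1 then
        -((1 / d (N - 1) : ℝ) : ℂ) * Complex.exp (-(Complex.I * N * k)) else 0)
    + (if (j : ℕ) = 0 ∧ (i : ℕ) = N - 1 then
        -((1 / d (N - 1) : ℝ) : ℂ) * Complex.exp (Complex.I * N * k) else 0)

namespace BandGapAux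


/-- Generic second-order recurrence solution. -/
noncomputable def sol (D : ℕ → ℂ) (z a b : ℂ) : ℕ → ℂ
  | 0 => a
  | 1 => b
  | n+2 => D (n+1) * ((1/D n + 1/D (n+1) - z) * sol D z a b (n+1) - (1/D n) * sol D z a b n)

lemma sol_succ_succ (D : ℕ → ℂ) (z a b : ℂ) (n : ℕ) :
    sol D z a b (n+2)
      = D (n+1) * ((1/D n + 1/D (n+1) - z) * sol D z a b (n+1) - (1/D n) * sol D z a b n) := rfl

/-- Balance (three-term recurrence) equation at site `m`. -/
def Bal (D : ℕ → ℂ) (z : ℂ) (u : ℕ → ℂ) (m : ℕ) : Prop :=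
  (1/D m + 1/D (m+1)) * u (m+1) = (1/D m) * u m + (1/D (m+1)) * u (m+2) + z * u (m+1)

lemma sol_bal (D : ℕ → ℂ) (z : ℂ) (hD : ∀ n, D n ≠ 0) (a b : ℂ) (m : ℕ) :
    Bal D z (sol D z a b) m := by
  unfold Bal
  rw [sol_succ_succ]
  have h1 := hD m
  have h2 := hD (m+1)
  field_simp
  ring

lemma bal_unique (D : ℕ → ℂ) (z : ℂ) (hD : ∀ n, D n ≠ 0) (u : ℕ → ℂ) (a b : ℂ) (M : ℕ)
    (h0 : u 0 = a) (h1 : u 1 = b) (hbal : ∀ m, m < M → Bal D z u m) :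
    ∀ n, n ≤ M + 1 → u n = sol D z a b n := by
  intro n
  induction n using Nat.strong_induction_on with
  | _ n ih =>
    match n with
    | 0 => intro _; exact h0
    | 1 => intro _; exact h1
    | (m+2) =>
      intro hm
      have hb := hbal m (by omega)
      have hb2 := sol_bal D z hD a b m
      unfold Bal at hb hb2
      rw [ih m (by omega) (by omega), ih (m+1) (by omega) (by omega)] at hb
      have h3 : (1/D (m+1)) * u (m+2) = (1/D (m+1)) * sol D z a b (m+2) := by
        linear_combination hb2 - hb
      exact mul_left_cancel₀ (one_div_ne_zero (hD (m+1))) h3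

lemma sol_linear (D : ℕ → ℂ) (z a b : ℂ) :
    ∀ n, sol D z a b n = a * sol D z 1 0 n + b * sol D z 0 1 n := by
  have key : ∀ n, (sol D z a b n = a * sol D z 1 0 n + b * sol D z 0 1 n) ∧
      (sol D z a b (n+1) = a * sol D z 1 0 (n+1) + b * sol D z 0 1 (n+1)) := by
    intro n
    induction n with
    | zero => constructor <;> simp [sol]
    | succ m ih =>
      refine ⟨ih.2, ?_⟩
      rw [sol_succ_succ, sol_succ_succ, sol_succ_succ, ih.1, ih.2]
      ring
  exact fun n => (key n).1

lemma sol_wronskian (D : ℕ → ℂ) (z : ℂ) (hD : ∀ n, D n ≠ 0) :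
    ∀ n, sol D z 1 0 n * sol D z 0 1 (n+1) - sol D z 1 0 (n+1) * sol D z 0 1 n = D n / D 0 := by
  intro n
  induction n with
  | zero => simp [sol, div_self (hD 0)]
  | succ m ih =>
    rw [sol_succ_succ, sol_succ_succ]
    have h0 := hD 0
    have h1 := hD m
    have h2 := hD (m+1)
    field_simp at ih ⊢
    linear_combination D (m+1) * ih



lemma sum_ite_coord {M : Type*} [AddCommMonoid M] {n : ℕ} (f : Fin n → M) (m : ℕ) :
    (∑ j : Fin n, if m = (j:ℕ) then f j else 0) = if h : m < n then f ⟨m, h⟩ else 0 := by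
  classical
  by_cases h : m < n
  · rw [dif_pos h]
    have hc : ∀ j : Fin n, (m = (j:ℕ)) = ((⟨m, h⟩ : Fin n) = j) := by
      intro j; apply propext; constructor
      · intro hj; exact Fin.ext hj
      · intro hj; exact congrArg Fin.val hj
    simp only [hc]
    rw [Finset.sum_ite_eq]
    simp
  · rw [dif_neg h]
    apply Finset.sum_eq_zero
    intro j _
    rw [if_neg]
    intro hj
    exact h (hj ▸ j.isLt)

lemma kdir_row (N : ℕ) (d : ℕ → ℝ) (x : Fin (N-1) → ℝ) (i : Fin (N-1)) :
    (Kdir N d).mulVec x i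
      = (1/d (i:ℕ) + 1/d ((i:ℕ)+1)) * x i
        + (if h : (i:ℕ)+1 < N-1 then -(1/d ((i:ℕ)+1)) * x ⟨(i:ℕ)+1, h⟩ else 0)
        + (if h : 0 < (i:ℕ) then
            -(1/d (i:ℕ)) * x ⟨(i:ℕ)-1, lt_of_le_of_lt (Nat.sub_le _ _) i.isLt⟩ else 0) := by
  classical
  have split : ∀ j : Fin (N-1), Kdir N d i j * x j
      = (if (i:ℕ) = (j:ℕ) then (1/d (i:ℕ) + 1/d ((i:ℕ)+1)) * x j else 0)
        + (if (i:ℕ)+1 = (j:ℕ) then -(1/d ((i:ℕ)+1)) * x j else 0)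
        + (if (j:ℕ)+1 = (i:ℕ) then -(1/d ((j:ℕ)+1)) * x j else 0) := by
    intro j
    unfold Kdir
    split_ifs <;> first | ring1 | (exfalso; omega)
  show (∑ j, Kdir N d i j * x j) = _
  rw [Finset.sum_congr rfl (fun j _ => split j), Finset.sum_add_distrib,
    Finset.sum_add_distrib, sum_ite_coord, sum_ite_coord, dif_pos i.isLt, Fin.eta]
  congr 1
  by_cases h : 0 < (i:ℕ)
  · have hc : ∀ j : Fin (N-1), ((j:ℕ)+1 = (i:ℕ)) = ((i:ℕ)-1 = (j:ℕ)) := by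
      intro j; apply propext; omega
    simp only [hc]
    rw [sum_ite_coord, dif_pos (lt_of_le_of_lt (Nat.sub_le _ _) i.isLt), dif_pos h,
      Nat.sub_add_cancel h]
  · rw [dif_neg h]
    apply Finset.sum_eq_zero
    intro j _
    rw [if_neg (by omega)]

lemma kbloch_row (N : ℕ) (d : ℕ → ℝ) (k : ℝ) (ψ : Fin N → ℂ) (i : Fin N) :
    (Kbloch N d k).mulVec ψ i
      = ((1 / d (((i:ℕ) + (N - 1)) % N) + 1 / d (i:ℕ) : ℝ) : ℂ) * ψ i
        + (if h : (i:ℕ)+1 < N then ((-(1 / d (i:ℕ)) : ℝ) : ℂ) * ψ ⟨(i:ℕ)+1, h⟩ else 0)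
        + (if h : 0 < (i:ℕ) then ((-(1 / d ((i:ℕ)-1)) : ℝ) : ℂ)
            * ψ ⟨(i:ℕ)-1, lt_of_le_of_lt (Nat.sub_le _ _) i.isLt⟩ else 0)
        + (if (i:ℕ) = 0 then -((1 / d (N-1) : ℝ) : ℂ) * Complex.exp (-(Complex.I * N * k))
            * ψ ⟨N-1, Nat.sub_lt (lt_of_le_of_lt (Nat.zero_le _) i.isLt) one_pos⟩ else 0)
        + (if (i:ℕ) = N-1 then -((1 / d (N-1) : ℝ) : ℂ) * Complex.exp (Complex.I * N * k)
            * ψ ⟨0, lt_of_le_of_lt (Nat.zero_le _) i.isLt⟩ else 0) := by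
  classical
  show (∑ j, Kbloch N d k i j * ψ j) = _
  have split : ∀ j : Fin N, Kbloch N d k i j * ψ j
      = (if (i:ℕ) = (j:ℕ) then
            ((1 / d (((i:ℕ) + (N - 1)) % N) + 1 / d (i:ℕ) : ℝ) : ℂ) * ψ j else 0)
        + (if (i:ℕ)+1 = (j:ℕ) then ((-(1 / d (i:ℕ)) : ℝ) : ℂ) * ψ j else 0)
        + (if (j:ℕ)+1 = (i:ℕ) then ((-(1 / d ((j:ℕ)) ) : ℝ) : ℂ) * ψ j else 0)
        + (if (i:ℕ) = 0 ∧ (j:ℕ) = N-1 then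
            -((1 / d (N-1) : ℝ) : ℂ) * Complex.exp (-(Complex.I * N * k)) * ψ j else 0)
        + (if (j:ℕ) = 0 ∧ (i:ℕ) = N-1 then
            -((1 / d (N-1) : ℝ) : ℂ) * Complex.exp (Complex.I * N * k) * ψ j else 0) := by
    intro j
    unfold Kbloch
    split_ifs <;> first | ring1 | (exfalso; omega)
  rw [Finset.sum_congr rfl (fun j _ => split j)]
  rw [Finset.sum_add_distrib, Finset.sum_add_distrib, Finset.sum_add_distrib,
    Finset.sum_add_distrib]
  rw [sum_ite_coord, sum_ite_coord, dif_pos i.isLt, Fin.eta]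
  congr 1
  · congr 1
    · congr 1
      -- third term
      by_cases h : 0 < (i:ℕ)
      · have hc : ∀ j : Fin N, ((j:ℕ)+1 = (i:ℕ)) = ((i:ℕ)-1 = (j:ℕ)) := by
          intro j; apply propext; omega
        simp only [hc]
        rw [sum_ite_coord, dif_pos (lt_of_le_of_lt (Nat.sub_le _ _) i.isLt), dif_pos h]
      · rw [dif_neg h]
        apply Finset.sum_eq_zero
        intro j _
        rw [if_neg (by omega)]
    · -- fourth term
      by_cases h : (i:ℕ) = 0
      · have hc : ∀ j : Fin N, ((i:ℕ) = 0 ∧ (j:ℕ) = N-1) = (N-1 = (j:ℕ)) := by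
          intro j; apply propext; constructor
          · intro hj; omega
          · intro hj; exact ⟨h, hj.symm⟩
        simp only [hc]
        rw [sum_ite_coord,
          dif_pos (Nat.sub_lt (lt_of_le_of_lt (Nat.zero_le _) i.isLt) one_pos), if_pos h]
      · rw [if_neg h]
        apply Finset.sum_eq_zero
        intro j _
        rw [if_neg (by tauto)]
  · -- fifth term
    by_cases h : (i:ℕ) = N-1
    · have hc : ∀ j : Fin N, ((j:ℕ) = 0 ∧ (i:ℕ) = N-1) = ((0:ℕ) = (j:ℕ)) := by
        intro j; apply propext; constructor
        · intro hj; omega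
        · intro hj; exact ⟨hj.symm, h⟩
      simp only [hc]
      rw [sum_ite_coord, dif_pos (lt_of_le_of_lt (Nat.zero_le _) i.isLt), if_pos h]
    · rw [if_neg h]
      apply Finset.sum_eq_zero
      intro j _
      rw [if_neg (by tauto)]



/-- Extension of the Dirichlet eigenvector. -/
noncomputable def uv (N : ℕ) (v : ℕ → ℝ) (α : ℝ) : ℕ → ℂ := fun n =>
  if n < N then ((v n : ℝ) : ℂ) else if n = N then 0 else ((α * v 1 : ℝ) : ℂ)

/-- Quasi-periodic extension of the Bloch eigenvector. -/
noncomputable def uψ (N : ℕ) (ψ : Fin N → ℂ) (e : ℂ) : ℕ → ℂ := fun n =>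
  if h : n < N then ψ ⟨n, h⟩ else e * (if h2 : n - N < N then ψ ⟨n - N, h2⟩ else 0)

lemma uv_lt (N : ℕ) (v : ℕ → ℝ) (α : ℝ) {n : ℕ} (h : n < N) :
    uv N v α n = ((v n : ℝ) : ℂ) := if_pos h

lemma uv_N (N : ℕ) (v : ℕ → ℝ) (α : ℝ) : uv N v α N = 0 := by
  unfold uv; rw [if_neg (lt_irrefl N), if_pos rfl]

lemma uv_N1 (N : ℕ) (v : ℕ → ℝ) (α : ℝ) (hN : 0 < N) :
    uv N v α (N+1) = ((α * v 1 : ℝ) : ℂ) := by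
  unfold uv; rw [if_neg (by omega), if_neg (by omega)]

lemma uψ_lt (N : ℕ) (ψ : Fin N → ℂ) (e : ℂ) {n : ℕ} (h : n < N) :
    uψ N ψ e n = ψ ⟨n, h⟩ := dif_pos h

lemma uψ_N (N : ℕ) (ψ : Fin N → ℂ) (e : ℂ) (hN : 0 < N) :
    uψ N ψ e N = e * ψ ⟨0, hN⟩ := by
  unfold uψ
  rw [dif_neg (lt_irrefl N)]
  congr 1
  rw [show N - N = 0 from Nat.sub_self N] at *
  rw [dif_pos hN]

lemma uψ_N1 (N : ℕ) (ψ : Fin N → ℂ) (e : ℂ) (hN : 1 < N) :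
    uψ N ψ e (N+1) = e * ψ ⟨1, hN⟩ := by
  unfold uψ
  rw [dif_neg (by omega)]
  congr 1
  rw [show N + 1 - N = 1 from by omega] at *
  rw [dif_pos hN]

end BandGapAux


open BandGapAux

/-- If `|α(ω)| ≠ 1` for an eigenvalue `ω²` of `K`, then `ω²` lies in a band gap of the
infinite periodic system: there is no `k ∈ ℝ` for which `ω²` is an eigenvalue of the
Bloch matrix `K̃(k)`. -/
theorem band_gap_of_alpha_not_unimodular
    (N : ℕ) (hN : 2 ≤ N) (d : ℕ → ℝ) (hd : ∀ j, 0 < d j)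
    (ω : ℝ) (v : ℕ → ℝ) (hv0 : v 0 = 0) (hv1 : v 1 ≠ 0)
    (heig : (Kdir N d).mulVec (fun i => v ((i : ℕ) + 1)) =
      (ω ^ 2) • fun i : Fin (N - 1) => v ((i : ℕ) + 1))
    (α : ℝ) (hα : α = -(d 0 / d (N - 1)) * (v (N - 1) / v 1))
    (hαne : |α| ≠ 1) :
    ∀ k : ℝ, ∀ ψ : Fin N → ℂ,
      (Kbloch N d k).mulVec ψ = ((ω ^ 2 : ℝ) : ℂ) • ψ → ψ = 0 := by
  intro k ψ hψ
  set D : ℕ → ℂ := fun n => ((d (n % N) : ℝ) : ℂ) with hDdef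
  have hD : ∀ n, D n ≠ 0 := by
    intro n
    simp only [hDdef, ne_eq, Complex.ofReal_eq_zero]
    exact (hd _).ne'
  have hmod : ∀ m, m < N → D m = ((d m : ℝ) : ℂ) := by
    intro m hm
    simp only [hDdef, Nat.mod_eq_of_lt hm]
  have hDN : D N = ((d 0 : ℝ) : ℂ) := by simp only [hDdef, Nat.mod_self]
  set e : ℂ := Complex.exp (Complex.I * N * k) with hedef
  have hee : Complex.exp (-(Complex.I * N * k)) * e = 1 := by
    rw [hedef, ← Complex.exp_add]
    simp
  have habse : ‖e‖ = 1 := by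
    rw [hedef, Complex.norm_exp]
    simp [Complex.mul_re]
  -- Balance equations for the extended Dirichlet eigenvector
  have hbv : ∀ m, m < N → Bal D ((ω ^ 2 : ℝ) : ℂ) (uv N v α) m := by
    intro m hm
    unfold Bal
    by_cases hc : m + 1 < N
    · -- interior rows, from `heig` at row m
      have hrow := congrFun heig ⟨m, by omega⟩
      rw [kdir_row] at hrow
      simp only [Pi.smul_apply, smul_eq_mul, Fin.val_mk] at hrow
      rw [hmod m hm, hmod (m+1) hc, uv_lt N v α hm, uv_lt N v α hc]
      by_cases h2 : m + 1 < N - 1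
      · rw [dif_pos h2, show m+1+1 = m+2 from rfl] at hrow
        rw [uv_lt N v α (show m+2 < N by omega)]
        rcases Nat.eq_zero_or_pos m with rfl | h0
        · rw [dif_neg (lt_irrefl 0)] at hrow
          have hC := congrArg (Complex.ofReal) hrow
          push_cast at hC ⊢
          rw [hv0]
          push_cast
          linear_combination hC
        · rw [dif_pos h0, Nat.sub_add_cancel h0] at hrow
          have hC := congrArg (Complex.ofReal) hrow
          push_cast at hC ⊢
          linear_combination hC
      · rw [dif_neg h2] at hrow
        rw [show m+2 = N by omega, uv_N]
        rcases Nat.eq_zero_or_pos m with rfl | h0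
        · rw [dif_neg (lt_irrefl 0)] at hrow
          have hC := congrArg (Complex.ofReal) hrow
          push_cast at hC ⊢
          rw [hv0]
          push_cast
          linear_combination hC
        · rw [dif_pos h0, Nat.sub_add_cancel h0] at hrow
          have hC := congrArg (Complex.ofReal) hrow
          push_cast at hC ⊢
          linear_combination hC
    · -- the extra row m = N-1, pure algebra from the definition of α
      have hm' : m = N - 1 := by omega
      subst hm'
      rw [show N-1+1 = N by omega, show N-1+2 = N+1 by omega]
      rw [uv_N, uv_N1 N v α (by omega), uv_lt N v α (show N-1 < N by omega),
        hmod (N-1) (by omega), hDN]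
      have hr : (1/(d (N-1))) * v (N-1) + (1/(d 0)) * (α * v 1) = 0 := by
        rw [hα]
        have h1 : d 0 ≠ 0 := (hd 0).ne'
        have h2 : d (N-1) ≠ 0 := (hd (N-1)).ne'
        field_simp
        ring
      have hC := congrArg (Complex.ofReal) hr
      push_cast at hC ⊢
      linear_combination -hC
  -- Balance equations for the quasi-periodically extended Bloch eigenvector
  have hbψ : ∀ m, m < N → Bal D ((ω ^ 2 : ℝ) : ℂ) (uψ N ψ e) m := by
    intro m hm
    unfold Bal
    by_cases hc : m + 1 < N
    · -- rows 1,...,N-1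
      have hrow := congrFun hψ ⟨m+1, hc⟩
      rw [kbloch_row] at hrow
      simp only [Pi.smul_apply, smul_eq_mul, Fin.val_mk] at hrow
      have hidx : (m+1+(N-1)) % N = m := by
        rw [show m+1+(N-1) = N + m by omega, Nat.add_mod_left, Nat.mod_eq_of_lt (by omega)]
      rw [hidx, dif_pos (Nat.succ_pos m)] at hrow
      simp only [Nat.add_sub_cancel] at hrow
      rw [if_neg (by omega)] at hrow
      rw [hmod m hm, hmod (m+1) hc, uψ_lt N ψ e hm, uψ_lt N ψ e hc]
      by_cases h2 : m + 2 < N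
      · rw [dif_pos (show m+1+1 < N by omega)] at hrow
        simp only [show m+1+1 = m+2 from rfl] at hrow
        rw [if_neg (show ¬ m+1 = N-1 by omega)] at hrow
        rw [uψ_lt N ψ e h2]
        push_cast at hrow ⊢
        linear_combination hrow
      · rw [dif_neg (show ¬ m+1+1 < N by omega),
          if_pos (show m+1 = N-1 by omega)] at hrow
        rw [show N-1 = m+1 by omega] at hrow
        rw [show m+2 = N by omega, uψ_N N ψ e (by omega)]
        push_cast at hrow ⊢
        linear_combination hrow
    · -- row 0, multiplied by e
      have hm' : m = N - 1 := by omega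
      subst hm'
      have hrow := congrFun hψ ⟨0, by omega⟩
      rw [kbloch_row] at hrow
      simp only [Pi.smul_apply, smul_eq_mul, Fin.val_mk, Nat.zero_add] at hrow
      rw [Nat.mod_eq_of_lt (show N-1 < N by omega)] at hrow
      rw [dif_pos (show 0+1 < N by omega), dif_neg (lt_irrefl 0)] at hrow
      simp only [if_true] at hrow
      rw [if_neg (show ¬ (0:ℕ) = N-1 by omega)] at hrow
      rw [show N-1+1 = N by omega, show N-1+2 = N+1 by omega]
      rw [uψ_N N ψ e (by omega), uψ_N1 N ψ e (by omega),
        uψ_lt N ψ e (show N-1 < N by omega), hmod (N-1) (by omega), hDN]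
      push_cast at hrow ⊢
      linear_combination e * hrow + (1/((d (N-1) : ℝ) : ℂ)) * ψ ⟨N-1, by omega⟩ * hee
  -- identify the extensions with the generic recurrence solutions
  have hψ0lt : (0:ℕ) < N := by omega
  have hψ1lt : (1:ℕ) < N := by omega
  have hv_sol := bal_unique D ((ω ^ 2 : ℝ) : ℂ) hD (uv N v α) 0 ((v 1 : ℝ) : ℂ) N
    (by rw [uv_lt N v α hψ0lt, hv0]; simp) (uv_lt N v α hψ1lt) hbv
  have hψ_sol := bal_unique D ((ω ^ 2 : ℝ) : ℂ) hD (uψ N ψ e) (ψ ⟨0, hψ0lt⟩) (ψ ⟨1, hψ1lt⟩) N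
    (uψ_lt N ψ e hψ0lt) (uψ_lt N ψ e hψ1lt) hbψ
  have hv1C : ((v 1 : ℝ) : ℂ) ≠ 0 := by
    simp only [ne_eq, Complex.ofReal_eq_zero]; exact hv1
  have hFN : sol D ((ω ^ 2 : ℝ) : ℂ) 0 1 N = 0 := by
    have h1 := hv_sol N (by omega)
    rw [uv_N, sol_linear] at h1
    have h2 : ((v 1 : ℝ) : ℂ) * sol D ((ω ^ 2 : ℝ) : ℂ) 0 1 N = 0 := by linear_combination -h1
    exact (mul_eq_zero.mp h2).resolve_left hv1C
  have hFN1 : sol D ((ω ^ 2 : ℝ) : ℂ) 0 1 (N+1) = ((α : ℝ) : ℂ) := by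
    have h1 := hv_sol (N+1) (by omega)
    rw [uv_N1 N v α (by omega), sol_linear] at h1
    have h2 : ((v 1 : ℝ) : ℂ) * sol D ((ω ^ 2 : ℝ) : ℂ) 0 1 (N+1) = ((v 1 : ℝ) : ℂ) * ((α : ℝ) : ℂ) := by
      push_cast at h1 ⊢
      linear_combination -h1
    exact mul_left_cancel₀ hv1C h2
  have hEN : ψ ⟨0, hψ0lt⟩ * sol D ((ω ^ 2 : ℝ) : ℂ) 1 0 N = e * ψ ⟨0, hψ0lt⟩ := by
    have h1 := hψ_sol N (by omega)
    rw [uψ_N N ψ e hψ0lt, sol_linear, hFN] at h1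
    linear_combination -h1
  have hEN1 : ψ ⟨0, hψ0lt⟩ * sol D ((ω ^ 2 : ℝ) : ℂ) 1 0 (N+1) + ψ ⟨1, hψ1lt⟩ * ((α : ℝ) : ℂ) = e * ψ ⟨1, hψ1lt⟩ := by
    have h1 := hψ_sol (N+1) (by omega)
    rw [uψ_N1 N ψ e hψ1lt, sol_linear, hFN1] at h1
    linear_combination -h1
  have hW : sol D ((ω ^ 2 : ℝ) : ℂ) 1 0 N * ((α : ℝ) : ℂ) = 1 := by
    have h1 := sol_wronskian D ((ω ^ 2 : ℝ) : ℂ) hD N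
    rw [hFN, hFN1, hDN, hmod 0 (by omega)] at h1
    rw [div_self (by simp only [ne_eq, Complex.ofReal_eq_zero]; exact (hd 0).ne')] at h1
    linear_combination h1
  have habsα : ‖((α : ℝ) : ℂ)‖ ≠ 1 := by
    rwa [Complex.norm_real, Real.norm_eq_abs]
  have hαnee : ((α : ℝ) : ℂ) ≠ e := by
    intro h
    exact habsα (by rw [h, habse])
  have hψ0 : ψ ⟨0, hψ0lt⟩ = 0 := by
    by_contra h0
    have hENe : sol D ((ω ^ 2 : ℝ) : ℂ) 1 0 N = e := mul_left_cancel₀ h0 (by linear_combination hEN)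
    rw [hENe] at hW
    have : ‖e * ((α : ℝ) : ℂ)‖ = 1 := by rw [hW, norm_one]
    rw [norm_mul, habse, one_mul] at this
    exact habsα this
  have hψ1 : ψ ⟨1, hψ1lt⟩ = 0 := by
    have h2 : ψ ⟨1, hψ1lt⟩ * (((α : ℝ) : ℂ) - e) = 0 := by
      linear_combination hEN1 - sol D ((ω ^ 2 : ℝ) : ℂ) 1 0 (N+1) * hψ0
    rcases mul_eq_zero.mp h2 with h | h
    · exact h
    · exact absurd (by linear_combination h) hαnee
  funext i
  have h1 := hψ_sol i (by omega)
  rw [uψ_lt N ψ e i.isLt, sol_linear, hψ0, hψ1] at h1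
  simpa using h1
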